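/- arXiv:2008.09702 — 10 statements merged into one kernel-verified Lean document; each statement's English description precedes it below -/
import Mathlib

section
/- Let ε ≥ 0 and δ ≥ 0. Suppose the marginals p satisfy the (ε,δ)-value-differential-privacy condition: for all neighboring d N d' and every v ∈ V, p d v ≤ e^ε · p d' v + δ. Then p satisfies (ε, (|V|−1)·δ)-differential privacy: for all neighboring d N d' and every subset S ⊆ V, ∑_{v∈S} p d v ≤ e^ε · ∑_{v∈S} p d' v + (|V|−1)·δ. -/
open Finset Real

/-- Value-differential-privacy implies (ε, (|V|-1)·δ)-differential privacy. -/
theorem vdp_implies_dp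
    {D V : Type*} [Fintype D] [Fintype V] [Nonempty D] [Nonempty V]
    (N : D → D → Prop) (hN : Symmetric N)
    (p : D → V → ℝ)
    (hnonneg : ∀ d v, 0 ≤ p d v)
    (hsum : ∀ d, ∑ v, p d v = 1)
    (ε δ : ℝ) (hε : 0 ≤ ε) (hδ : 0 ≤ δ)
    (hvdp : ∀ d d', N d d' → ∀ v, p d v ≤ Real.exp ε * p d' v + δ) :
    ∀ d d', N d d' → ∀ S : Finset V,
      ∑ v ∈ S, p d v ≤ Real.exp ε * ∑ v ∈ S, p d' v + ((Fintype.card V : ℝ) - 1) * δ := by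
  intro d d' hdd' S
  have h1 : (1:ℝ) ≤ Real.exp ε := by
    simpa using Real.one_le_exp hε
  by_cases hS : S = Finset.univ
  · subst hS
    rw [hsum, hsum]
    have hc : (0:ℝ) ≤ ((Fintype.card V : ℝ) - 1) * δ := by
      have : (1:ℝ) ≤ (Fintype.card V : ℝ) := by
        exact_mod_cast Fintype.card_pos
      nlinarith
    nlinarith
  · have hcard : (S.card : ℝ) ≤ (Fintype.card V : ℝ) - 1 := by
      have : S.card < Fintype.card V := by
        exact Finset.card_lt_card (Finset.ssubset_univ_iff.mpr hS)
      have := Nat.succ_le_of_lt this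
      have : (S.card + 1 : ℝ) ≤ (Fintype.card V : ℝ) := by exact_mod_cast this
      linarith
    calc ∑ v ∈ S, p d v ≤ ∑ v ∈ S, (Real.exp ε * p d' v + δ) :=
          Finset.sum_le_sum fun v _ => hvdp d d' hdd' v
      _ = Real.exp ε * ∑ v ∈ S, p d' v + (S.card : ℝ) * δ := by
          rw [Finset.sum_add_distrib, Finset.mul_sum, Finset.sum_const, nsmul_eq_mul]
      _ ≤ Real.exp ε * ∑ v ∈ S, p d' v + ((Fintype.card V : ℝ) - 1) * δ := by
          nlinarith
end

section
/- Let M : D → V → ℝ be an independent mechanism that is nontrivial and ι-low-influence. Then ι ≥ 1/2. -/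
open Finset

/-- A nontrivial, ι-low-influence independent mechanism satisfies ι ≥ 1/2. -/
theorem nontrivial_independent_not_low_influence
    {D V : Type*} [Fintype D] [Fintype V] [Nonempty D] [Nonempty V]
    (N : D → D → Prop) (hN : Symmetric N)
    (M : D → V → ℝ)
    (hnonneg : ∀ d v, 0 ≤ M d v)
    (hsum : ∀ d, ∑ v, M d v = 1)
    (ι : ℝ)
    (hLI : ∀ d d', N d d' → 1 - ∑ v, M d v * M d' v ≤ ι)
    (hnontrivial : ∃ d d' v₁ v₂, N d d' ∧ v₁ ≠ v₂ ∧
      (∀ v, M d v ≤ M d v₁) ∧ (∀ v, M d' v ≤ M d' v₂)) :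
    (1 : ℝ) / 2 ≤ ι := by
  classical
  obtain ⟨d, d', v₁, v₂, hNdd', hne, h1, h2⟩ := hnontrivial
  have key : 1 - ∑ v, M d v * M d' v ≤ ι := hLI d d' hNdd'
  set a := M d v₁ with ha_def
  set b := M d' v₂ with hb_def
  set c := M d v₂ with hc_def
  suffices hS : ∑ v, M d v * M d' v ≤ 1 / 2 by linarith
  have hS_le_a : ∑ v, M d v * M d' v ≤ a := by
    calc ∑ v, M d v * M d' v ≤ ∑ v, a * M d' v :=
          Finset.sum_le_sum (fun v _ => mul_le_mul_of_nonneg_right (h1 v) (hnonneg d' v))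
      _ = a * ∑ v, M d' v := by rw [Finset.mul_sum]
      _ = a := by rw [hsum]; ring
  have hS_le_b : ∑ v, M d v * M d' v ≤ b := by
    calc ∑ v, M d v * M d' v ≤ ∑ v, M d v * b :=
          Finset.sum_le_sum (fun v _ => mul_le_mul_of_nonneg_left (h2 v) (hnonneg d v))
      _ = (∑ v, M d v) * b := by rw [← Finset.sum_mul]
      _ = b := by rw [hsum]; ring
  by_cases ha : a ≤ 1 / 2
  · linarith
  by_cases hb : b ≤ 1 / 2
  · linarith
  -- now a > 1/2 and b > 1/2
  have hsplit_d : c + ∑ v ∈ Finset.univ.erase v₂, M d v = 1 := by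
    rw [Finset.add_sum_erase _ _ (Finset.mem_univ v₂), hsum]
  have hsplit_d' : b + ∑ v ∈ Finset.univ.erase v₂, M d' v = 1 := by
    rw [Finset.add_sum_erase _ _ (Finset.mem_univ v₂), hsum]
  have hv₁mem : v₁ ∈ Finset.univ.erase v₂ := Finset.mem_erase.mpr ⟨hne, Finset.mem_univ v₁⟩
  have hc_le : c ≤ 1 - a := by
    have : a ≤ ∑ v ∈ Finset.univ.erase v₂, M d v :=
      Finset.single_le_sum (fun v _ => hnonneg d v) hv₁mem
    linarith
  have hc0 : 0 ≤ c := hnonneg d v₂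
  have htail : ∀ v ∈ Finset.univ.erase v₂, M d' v ≤ 1 - b := by
    intro v hv
    have : M d' v ≤ ∑ w ∈ Finset.univ.erase v₂, M d' w :=
      Finset.single_le_sum (fun w _ => hnonneg d' w) hv
    linarith
  have hS_split : ∑ v, M d v * M d' v
      = c * b + ∑ v ∈ Finset.univ.erase v₂, M d v * M d' v := by
    rw [Finset.add_sum_erase _ (fun v => M d v * M d' v) (Finset.mem_univ v₂)]
  have htail_le : ∑ v ∈ Finset.univ.erase v₂, M d v * M d' v ≤ (1 - c) * (1 - b) := by
    calc ∑ v ∈ Finset.univ.erase v₂, M d v * M d' v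
        ≤ ∑ v ∈ Finset.univ.erase v₂, M d v * (1 - b) :=
          Finset.sum_le_sum (fun v hv => mul_le_mul_of_nonneg_left (htail v hv) (hnonneg d v))
      _ = (∑ v ∈ Finset.univ.erase v₂, M d v) * (1 - b) := by rw [← Finset.sum_mul]
      _ = (1 - c) * (1 - b) := by rw [show (∑ v ∈ Finset.univ.erase v₂, M d v) = 1 - c by linarith]
  have hS_le : ∑ v, M d v * M d' v ≤ c * b + (1 - c) * (1 - b) := by
    rw [hS_split]; linarith
  nlinarith [mul_nonneg (sub_nonneg.mpr hc_le) (by linarith : (0:ℝ) ≤ 2*b - 1),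
    mul_nonneg (by linarith : (0:ℝ) ≤ 2*a - 1) (by linarith : (0:ℝ) ≤ 2*b - 1)]
end

section
/- Let M : D → V → ℝ be an independent mechanism that is nontrivial and ι-low-influence. Then ι ≥ 1/|V|². -/
open Finset

/-- A nontrivial, ι-low-influence independent mechanism satisfies ι ≥ 1/|V|². -/
theorem nontrivial_independent_influence_card_bound
    {D V : Type*} [Fintype D] [Fintype V] [Nonempty D] [Nonempty V]
    (N : D → D → Prop) (hN : Symmetric N)
    (M : D → V → ℝ)
    (hnonneg : ∀ d v, 0 ≤ M d v)
    (hsum : ∀ d, ∑ v, M d v = 1)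
    (ι : ℝ)
    (hLI : ∀ d d', N d d' → 1 - ∑ v, M d v * M d' v ≤ ι)
    (hnontrivial : ∃ d d' v₁ v₂, N d d' ∧ v₁ ≠ v₂ ∧
      (∀ v, M d v ≤ M d v₁) ∧ (∀ v, M d' v ≤ M d' v₂)) :
    (1 : ℝ) / (Fintype.card V : ℝ) ^ 2 ≤ ι := by
  classical
  obtain ⟨d, d', v₁, v₂, hNdd', hne, h1, h2⟩ := hnontrivial
  set n : ℝ := (Fintype.card V : ℝ) with hn
  have hnpos : (0 : ℝ) < n := by
    rw [hn]; exact_mod_cast Fintype.card_pos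
  -- max probabilities are at least 1/n
  have hmax : ∀ (e : D) (w : V), (∀ v, M e v ≤ M e w) → 1 / n ≤ M e w := by
    intro e w hw
    have : (1 : ℝ) ≤ n * M e w := by
      calc (1 : ℝ) = ∑ v, M e v := (hsum e).symm
        _ ≤ ∑ _v : V, M e w := Finset.sum_le_sum fun v _ => hw v
        _ = n * M e w := by
            rw [Finset.sum_const, nsmul_eq_mul, Finset.card_univ]
    rw [div_le_iff₀ hnpos]
    linarith [this]
  have hp1 : 1 / n ≤ M d v₁ := hmax d v₁ h1
  have hq2 : 1 / n ≤ M d' v₂ := hmax d' v₂ h2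
  -- M d v₁ + M d v₂ ≤ 1
  have hsub : M d v₁ + M d v₂ ≤ 1 := by
    have h := Finset.sum_le_sum_of_subset_of_nonneg
      (Finset.subset_univ ({v₁, v₂} : Finset V))
      (fun v _ _ => hnonneg d v)
    rw [Finset.sum_pair hne, hsum d] at h
    exact h
  -- each probability ≤ 1
  have hle1 : ∀ v, M d v ≤ 1 := by
    intro v
    rw [← hsum d]
    exact Finset.single_le_sum (fun v _ => hnonneg d v) (Finset.mem_univ v)
  have key : 1 - ∑ v, M d v * M d' v = ∑ v, M d' v * (1 - M d v) := by
    simp only [mul_sub, mul_one, Finset.sum_sub_distrib, hsum d']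
    congr 1
    exact Finset.sum_congr rfl fun v _ => mul_comm _ _
  have hterm : M d' v₂ * (1 - M d v₂) ≤ ∑ v, M d' v * (1 - M d v) :=
    Finset.single_le_sum (f := fun v => M d' v * (1 - M d v))
      (fun v _ => mul_nonneg (hnonneg d' v) (by linarith [hle1 v]))
      (Finset.mem_univ v₂)
  have hstep : 1 / n * (1 / n) ≤ M d' v₂ * (1 - M d v₂) := by
    apply mul_le_mul hq2 (by linarith) (by positivity) (hnonneg d' v₂)
  have hfin : 1 / n ^ 2 ≤ 1 - ∑ v, M d v * M d' v := by
    rw [key]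
    calc 1 / n ^ 2 = 1 / n * (1 / n) := by ring
      _ ≤ M d' v₂ * (1 - M d v₂) := hstep
      _ ≤ _ := hterm
  exact le_trans hfin (hLI d d' hNdd')
end

section
/- Let ι ≥ 0 and let P be a joint mechanism that is ι-low-influence. Then P is (0, ι·(|V|−1))-differentially private: for all neighboring d N d' and every subset S ⊆ V, ∑_{v∈S} Pr[d, v] ≤ ∑_{v∈S} Pr[d', v] + ι·(|V|−1). -/
open Finset

set_option maxHeartbeats 1000000 in
/-- An ι-low-influence joint mechanism is (0, ι·(|V|−1))-differentially private. -/
theorem low_influence_implies_dp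
    {D V : Type*} [Fintype D] [Fintype V] [Nonempty D] [Nonempty V]
    [DecidableEq D] [DecidableEq V]
    (N : D → D → Prop) (hN : Symmetric N)
    (P : (D → V) → ℝ)
    (hnonneg : ∀ h, 0 ≤ P h)
    (hsum : ∑ h : D → V, P h = 1)
    (ι : ℝ) (hι : 0 ≤ ι)
    (hLI : ∀ d d', N d d' →
      ∑ h ∈ Finset.univ.filter (fun h : D → V => h d ≠ h d'), P h ≤ ι) :
    ∀ d d', N d d' → ∀ S : Finset V,
      (∑ v ∈ S, ∑ h ∈ Finset.univ.filter (fun h : D → V => h d = v), P h)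
        ≤ (∑ v ∈ S, ∑ h ∈ Finset.univ.filter (fun h : D → V => h d' = v), P h)
          + ι * ((Fintype.card V : ℝ) - 1) := by
  intro d d' hdd' S
  have hfib : ∀ e : D,
      (∑ v ∈ S, ∑ h ∈ Finset.univ.filter (fun h : D → V => h e = v), P h)
        = ∑ h ∈ Finset.univ.filter (fun h : D → V => h e ∈ S), P h := by
    intro e
    exact Finset.sum_fiberwise_eq_sum_filter Finset.univ S (fun h => h e) P
  rw [hfib d, hfib d']
  -- split the left sum along whether h d' ∈ S
  have hsplit :
      (∑ h ∈ Finset.univ.filter (fun h : D → V => h d ∈ S), P h)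
        = (∑ h ∈ Finset.univ.filter (fun h : D → V => h d ∈ S ∧ h d' ∈ S), P h)
          + ∑ h ∈ Finset.univ.filter (fun h : D → V => h d ∈ S ∧ h d' ∉ S), P h := by
    rw [← Finset.sum_filter_add_sum_filter_not
      (Finset.univ.filter (fun h : D → V => h d ∈ S)) (fun h => h d' ∈ S)]
    congr 1 <;> · rw [Finset.filter_filter]
  rw [hsplit]
  have h1 :
      (∑ h ∈ Finset.univ.filter (fun h : D → V => h d ∈ S ∧ h d' ∈ S), P h)
        ≤ ∑ h ∈ Finset.univ.filter (fun h : D → V => h d' ∈ S), P h := by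
    apply Finset.sum_le_sum_of_subset_of_nonneg
    · intro h hh
      simp only [Finset.mem_filter, Finset.mem_univ, true_and] at hh ⊢
      exact hh.2
    · intro h _ _; exact hnonneg h
  have h2 :
      (∑ h ∈ Finset.univ.filter (fun h : D → V => h d ∈ S ∧ h d' ∉ S), P h)
        ≤ ι * ((Fintype.card V : ℝ) - 1) := by
    rcases Nat.lt_or_ge (Fintype.card V) 2 with hc | hc
    · -- card V = 1 : h d = h d' always, filter is empty
      have hc1 : Fintype.card V = 1 := le_antisymm (by omega) Fintype.card_pos
      have : ∀ h : D → V, h d = h d' := fun h =>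
        Subsingleton.elim (α := V) (h := Fintype.card_le_one_iff_subsingleton.mp hc1.le) _ _
      have hempty : Finset.univ.filter (fun h : D → V => h d ∈ S ∧ h d' ∉ S) = ∅ := by
        apply Finset.filter_false_of_mem
        intro h _
        rw [this h]
        tauto
      rw [hempty, Finset.sum_empty, hc1]
      norm_num
    · have hstep :
          (∑ h ∈ Finset.univ.filter (fun h : D → V => h d ∈ S ∧ h d' ∉ S), P h)
            ≤ ∑ h ∈ Finset.univ.filter (fun h : D → V => h d ≠ h d'), P h := by
        apply Finset.sum_le_sum_of_subset_of_nonneg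
        · intro h hh
          simp only [Finset.mem_filter, Finset.mem_univ, true_and] at hh ⊢
          intro he
          exact hh.2 (he ▸ hh.1)
        · intro h _ _; exact hnonneg h
      calc _ ≤ ι := hstep.trans (hLI d d' hdd')
        _ = ι * 1 := (mul_one ι).symm
        _ ≤ ι * ((Fintype.card V : ℝ) - 1) := by
            apply mul_le_mul_of_nonneg_left _ hι
            have : (2 : ℝ) ≤ (Fintype.card V : ℝ) := by exact_mod_cast hc
            linarith
  linarith
end

section
/- Suppose d₁ N d₂ with d₁ ≠ d₂, let v₁, v₂ ∈ V be distinct, and let 0 < α < 1. Then there exists a joint mechanism P : (D → V) → ℝ such that (i) P is α-low-influence, i.e. for all d N d', ∑_{h : D → V with h d ≠ h d'} P h ≤ α, and (ii) Pr[d₁, v₁] = (1+α)/2 and Pr[d₂, v₂] = (1+α)/2, so that v₁ is the strict most-likely output at d₁ and v₂ is the strict most-likely output at d₂; in particular P is nontrivial. Hence there exist nontrivial mechanisms with arbitrarily low influence. -/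
open Finset

/-- There exist nontrivial joint mechanisms with arbitrarily low influence. -/
theorem exists_nontrivial_low_influence_joint_mechanism
    {D V : Type*} [Fintype D] [Fintype V] [Nonempty D] [Nonempty V]
    [DecidableEq D] [DecidableEq V]
    (N : D → D → Prop) (hN : Symmetric N)
    (d₁ d₂ : D) (hneighbor : N d₁ d₂) (hd : d₁ ≠ d₂)
    (v₁ v₂ : V) (hv : v₁ ≠ v₂)
    (α : ℝ) (hα₀ : 0 < α) (hα₁ : α < 1) :
    ∃ P : (D → V) → ℝ,
      (∀ h, 0 ≤ P h) ∧
      (∑ h : D → V, P h = 1) ∧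
      (∀ d d', N d d' →
        ∑ h ∈ Finset.univ.filter (fun h : D → V => h d ≠ h d'), P h ≤ α) ∧
      (∑ h ∈ Finset.univ.filter (fun h : D → V => h d₁ = v₁), P h = (1 + α) / 2) ∧
      (∑ h ∈ Finset.univ.filter (fun h : D → V => h d₂ = v₂), P h = (1 + α) / 2) ∧
      (∀ v : V, v ≠ v₁ →
        (∑ h ∈ Finset.univ.filter (fun h : D → V => h d₁ = v), P h)
          < ∑ h ∈ Finset.univ.filter (fun h : D → V => h d₁ = v₁), P h) ∧
      (∀ v : V, v ≠ v₂ →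
        (∑ h ∈ Finset.univ.filter (fun h : D → V => h d₂ = v), P h)
          < ∑ h ∈ Finset.univ.filter (fun h : D → V => h d₂ = v₂), P h) := by
  classical
  set c₁ : D → V := fun _ => v₁ with hc₁
  set c₂ : D → V := fun _ => v₂ with hc₂
  set f : D → V := fun d => if d = d₁ then v₁ else v₂ with hf
  set P : (D → V) → ℝ := fun h =>
      (if h = c₁ then (1 - α) / 2 else 0) + (if h = c₂ then (1 - α) / 2 else 0)
        + (if h = f then α else 0) with hP
  have key : ∀ (p : (D → V) → Prop) [DecidablePred p],
      ∑ h ∈ Finset.univ.filter (fun h => p h), P h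
        = (if p c₁ then (1 - α) / 2 else 0) + (if p c₂ then (1 - α) / 2 else 0)
          + (if p f then α else 0) := by
    intro p _
    simp only [hP, Finset.sum_add_distrib]
    rw [Finset.sum_ite_eq' _ c₁ (fun _ => (1 - α) / 2),
        Finset.sum_ite_eq' _ c₂ (fun _ => (1 - α) / 2),
        Finset.sum_ite_eq' _ f (fun _ => α)]
    simp [Finset.mem_filter]
  have fd₁ : f d₁ = v₁ := by simp [hf]
  have fd₂ : f d₂ = v₂ := by simp [hf, (Ne.symm hd)]
  refine ⟨P, ?_, ?_, ?_, ?_, ?_, ?_, ?_⟩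
  · intro h
    simp only [hP]
    split_ifs <;> linarith
  · have := key (fun _ => True)
    simpa using this
  · intro d d' hdd'
    have h1 : ¬ (c₁ d ≠ c₁ d') := by simp [hc₁]
    have h2 : ¬ (c₂ d ≠ c₂ d') := by simp [hc₂]
    rw [key (fun h : D → V => h d ≠ h d'), if_neg h1, if_neg h2]
    split_ifs <;> linarith
  · rw [key (fun h : D → V => h d₁ = v₁)]
    simp [hc₁, hc₂, fd₁, Ne.symm hv]
    ring
  · rw [key (fun h : D → V => h d₂ = v₂)]
    simp [hc₁, hc₂, fd₂, hv]
    ring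
  · intro v hvv
    rw [key (fun h : D → V => h d₁ = v), key (fun h : D → V => h d₁ = v₁)]
    simp only [hc₁, hc₂, fd₁]
    split_ifs <;> first | linarith | (exfalso; simp_all)
  · intro v hvv
    rw [key (fun h : D → V => h d₂ = v), key (fun h : D → V => h d₂ = v₂)]
    simp only [hc₁, hc₂, fd₂]
    split_ifs <;> first | linarith | (exfalso; simp_all)
end

section
/- Let u, w : V → ℝ with u v ≥ 0 and w v ≥ 0 for all v, ∑_{v∈V} u v = 1 and ∑_{v∈V} w v = 1. Suppose a, b ∈ V are distinct, u a = max_{v∈V} u v, and w b = max_{v∈V} w v. Then ∑_{v∈V} u v · w v ≤ 1/2 (equivalently, the influence 1 − ∑_{v∈V} u v · w v is at least 1/2). -/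
open Finset

/-- If probability vectors `u` and `w` attain their maxima at distinct coordinates,
then their inner product is at most 1/2 (equivalently, the influence is at least 1/2). -/
theorem inner_product_le_half_of_distinct_argmax
    {V : Type*} [Fintype V] [Nonempty V]
    (u w : V → ℝ)
    (hu_nonneg : ∀ v, 0 ≤ u v) (hw_nonneg : ∀ v, 0 ≤ w v)
    (hu_sum : ∑ v, u v = 1) (hw_sum : ∑ v, w v = 1)
    (a b : V) (hab : a ≠ b)
    (ha : ∀ v, u v ≤ u a) (hb : ∀ v, w v ≤ w b) :
    ∑ v, u v * w v ≤ 1 / 2 := by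
  classical
  have h1 : ∑ v, u v * w v ≤ u a := by
    calc ∑ v, u v * w v ≤ ∑ v, u a * w v :=
          sum_le_sum fun v _ => mul_le_mul_of_nonneg_right (ha v) (hw_nonneg v)
      _ = u a := by rw [← mul_sum, hw_sum, mul_one]
  have h2 : ∑ v, u v * w v ≤ w b := by
    calc ∑ v, u v * w v ≤ ∑ v, u v * w b :=
          sum_le_sum fun v _ => mul_le_mul_of_nonneg_left (hb v) (hu_nonneg v)
      _ = w b := by rw [← sum_mul, hu_sum, one_mul]
  have herase : ∑ v ∈ univ.erase a, u v = 1 - u a := by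
    have := Finset.add_sum_erase univ u (mem_univ a)
    rw [hu_sum] at this; linarith
  have key : ∑ v, u v * w v ≤ u a * w a + (1 - u a) * w b := by
    have hsplit := Finset.add_sum_erase univ (fun v => u v * w v) (mem_univ a)
    have hrest : ∑ v ∈ univ.erase a, u v * w v ≤ (1 - u a) * w b := by
      calc ∑ v ∈ univ.erase a, u v * w v ≤ ∑ v ∈ univ.erase a, u v * w b :=
            sum_le_sum fun v _ => mul_le_mul_of_nonneg_left (hb v) (hu_nonneg v)
        _ = (1 - u a) * w b := by rw [← sum_mul, herase]
    rw [← hsplit]; linarith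
  have hwab : w a + w b ≤ 1 := by
    have hsub : ({a, b} : Finset V) ⊆ univ := subset_univ _
    have := Finset.sum_le_sum_of_subset_of_nonneg hsub
      (fun v _ _ => hw_nonneg v)
    rw [Finset.sum_pair hab, hw_sum] at this
    exact this
  rcases le_or_gt (u a) (1 / 2) with h | h
  · linarith
  · rcases le_or_gt (w b) (1 / 2) with h' | h'
    · linarith
    · have hwa : 0 ≤ w a := hw_nonneg a
      nlinarith [mul_le_mul_of_nonneg_left (show w a ≤ 1 - w b by linarith)
        (le_of_lt (lt_trans (by norm_num) h)),
        mul_nonneg (show (0:ℝ) ≤ 2 * u a - 1 by linarith)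
          (show (0:ℝ) ≤ 2 * w b - 1 by linarith)]
end

section
/- Let u, w : V → ℝ be probability vectors, let a, b ∈ V be distinct with u a = max_{v∈V} u v and w b = max_{v∈V} w v. Set σ_u := ∑_{v∈V, v≠a, v≠b} u v and define u* : V → ℝ by u* a = u a + σ_u/2, u* b = u b + σ_u/2, and u* v = 0 for v ∉ {a, b}; define w* analogously from w. Then u* and w* are probability vectors, u* a = max_{v∈V} u* v, w* b = max_{v∈V} w* v, and ∑_{v∈V} u* v · w* v ≥ ∑_{v∈V} u v · w v (equivalently, I(u*, w*) ≤ I(u, w)). -/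
open Finset

/-- Mass-consolidation onto the two argmax coordinates preserves the probability-vector
structure and the argmax coordinates, and does not decrease the inner product
(i.e. does not increase the influence). -/
theorem consolidation_decreases_influence
    {V : Type*} [Fintype V] [Nonempty V] [DecidableEq V]
    (u w : V → ℝ)
    (hu_nonneg : ∀ v, 0 ≤ u v) (hw_nonneg : ∀ v, 0 ≤ w v)
    (hu_sum : ∑ v, u v = 1) (hw_sum : ∑ v, w v = 1)
    (a b : V) (hab : a ≠ b)
    (ha : ∀ v, u v ≤ u a) (hb : ∀ v, w v ≤ w b)
    (σu σw : ℝ)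
    (hσu : σu = ∑ v ∈ Finset.univ.filter (fun v => v ≠ a ∧ v ≠ b), u v)
    (hσw : σw = ∑ v ∈ Finset.univ.filter (fun v => v ≠ a ∧ v ≠ b), w v)
    (ustar wstar : V → ℝ)
    (hustar : ustar = fun v => if v = a then u a + σu / 2
      else if v = b then u b + σu / 2 else 0)
    (hwstar : wstar = fun v => if v = a then w a + σw / 2
      else if v = b then w b + σw / 2 else 0) :
    (∀ v, 0 ≤ ustar v) ∧ (∀ v, 0 ≤ wstar v) ∧
    (∑ v, ustar v = 1) ∧ (∑ v, wstar v = 1) ∧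
    (∀ v, ustar v ≤ ustar a) ∧ (∀ v, wstar v ≤ wstar b) ∧
    (∑ v, u v * w v ≤ ∑ v, ustar v * wstar v) := by
  set S := Finset.univ.filter (fun v => v ≠ a ∧ v ≠ b) with hS
  have hSab : S = Finset.univ \ {a, b} := by
    ext v; simp [hS, and_comm]
  have key : ∀ f : V → ℝ, ∑ v, f v = f a + f b + ∑ v ∈ S, f v := by
    intro f
    have hsub : ({a, b} : Finset V) ⊆ Finset.univ := Finset.subset_univ _
    have := Finset.sum_sdiff (f := f) hsub
    rw [hSab, ← this, Finset.sum_pair hab]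
    ring
  have hσu0 : 0 ≤ σu := by
    rw [hσu]; exact Finset.sum_nonneg fun v _ => hu_nonneg v
  have hσw0 : 0 ≤ σw := by
    rw [hσw]; exact Finset.sum_nonneg fun v _ => hw_nonneg v
  have hua : ustar a = u a + σu / 2 := by simp [hustar]
  have hub : ustar b = u b + σu / 2 := by simp [hustar, hab, Ne.symm hab]
  have hwa : wstar a = w a + σw / 2 := by simp [hwstar]
  have hwb : wstar b = w b + σw / 2 := by simp [hwstar, hab, Ne.symm hab]
  have huS : ∀ v ∈ S, ustar v = 0 := by
    intro v hv; simp [hS] at hv; simp [hustar, hv.1, hv.2]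
  have hwS : ∀ v ∈ S, wstar v = 0 := by
    intro v hv; simp [hS] at hv; simp [hwstar, hv.1, hv.2]
  have huab : u a + u b + σu = 1 := by rw [hσu, ← key u]; exact hu_sum
  have hwab : w a + w b + σw = 1 := by rw [hσw, ← key w]; exact hw_sum
  refine ⟨?_, ?_, ?_, ?_, ?_, ?_, ?_⟩
  · intro v
    rw [hustar]
    dsimp only
    split_ifs
    · have := hu_nonneg a; linarith
    · have := hu_nonneg b; linarith
    · exact le_refl 0
  · intro v
    rw [hwstar]
    dsimp only
    split_ifs
    · have := hw_nonneg a; linarith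
    · have := hw_nonneg b; linarith
    · exact le_refl 0
  · rw [key ustar, hua, hub, Finset.sum_eq_zero huS]; linarith
  · rw [key wstar, hwa, hwb, Finset.sum_eq_zero hwS]; linarith
  · intro v
    rw [hua, hustar]
    dsimp only
    split_ifs
    · linarith
    · have := ha b; linarith
    · have := hu_nonneg a; linarith
  · intro v
    rw [hwb, hwstar]
    dsimp only
    split_ifs with h1
    · have := hb a; linarith
    · linarith
    · have := hw_nonneg b; linarith
  · rw [key (fun v => u v * w v), key (fun v => ustar v * wstar v)]
    have hz : ∑ v ∈ S, ustar v * wstar v = 0 :=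
      Finset.sum_eq_zero fun v hv => by rw [huS v hv, zero_mul]
    have hbound : ∑ v ∈ S, u v * w v ≤ (σu * w b + u a * σw) / 2 := by
      have : ∑ v ∈ S, u v * w v ≤ ∑ v ∈ S, (u v * w b + u a * w v) / 2 := by
        apply Finset.sum_le_sum
        intro v _
        have h1 : u v * w v ≤ u v * w b :=
          mul_le_mul_of_nonneg_left (hb v) (hu_nonneg v)
        have h2 : u v * w v ≤ u a * w v :=
          mul_le_mul_of_nonneg_right (ha v) (hw_nonneg v)
        linarith
      calc ∑ v ∈ S, u v * w v ≤ ∑ v ∈ S, (u v * w b + u a * w v) / 2 := this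
        _ = (σu * w b + u a * σw) / 2 := by
            rw [← Finset.sum_div, Finset.sum_add_distrib, ← Finset.sum_mul,
              ← Finset.mul_sum, ← hσu, ← hσw]
    rw [hz, hua, hub, hwa, hwb]
    have h1 : 0 ≤ σu * w a := mul_nonneg hσu0 (hw_nonneg a)
    have h2 : 0 ≤ σw * u b := mul_nonneg hσw0 (hu_nonneg b)
    have h3 : 0 ≤ σu * σw := mul_nonneg hσu0 hσw0
    nlinarith [hbound]
end

section
/- Let ε ≥ 0 and 0 ≤ δ ≤ 1, and set x* = (e^ε + δ)/(e^ε + 1). Then x* satisfies 0 ≤ x* ≤ 1, x* ≤ e^ε·(1 − x*) + δ, and 1 − x* ≤ e^ε·x* + δ; and every real x with 0 ≤ x ≤ 1, x ≤ e^ε·(1 − x) + δ, and 1 − x ≤ e^ε·x + δ satisfies x ≤ x*. Hence the maximum utility of a balanced independent (ε,δ)-differentially private binary mechanism is (e^ε + δ)/(e^ε + 1). -/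
open Real

/-- The maximum utility of a balanced independent (ε,δ)-differentially private binary
mechanism is x* = (e^ε + δ)/(e^ε + 1): x* is feasible, and every feasible x satisfies
x ≤ x*. -/
theorem optimal_balanced_independent_binary_mechanism
    (ε δ : ℝ) (hε : 0 ≤ ε) (hδ₀ : 0 ≤ δ) (hδ₁ : δ ≤ 1)
    (xstar : ℝ) (hxstar : xstar = (Real.exp ε + δ) / (Real.exp ε + 1)) :
    (0 ≤ xstar ∧ xstar ≤ 1) ∧
    (xstar ≤ Real.exp ε * (1 - xstar) + δ) ∧
    (1 - xstar ≤ Real.exp ε * xstar + δ) ∧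
    (∀ x : ℝ, 0 ≤ x → x ≤ 1 →
      x ≤ Real.exp ε * (1 - x) + δ → 1 - x ≤ Real.exp ε * x + δ → x ≤ xstar) := by
  have he1 : 1 ≤ Real.exp ε := Real.one_le_exp hε
  have hpos : (0:ℝ) < Real.exp ε + 1 := by linarith
  have hne : Real.exp ε + 1 ≠ 0 := ne_of_gt hpos
  subst hxstar
  refine ⟨⟨by positivity, ?_⟩, ?_, ?_, ?_⟩
  · rw [div_le_one hpos]; linarith
  · have hq : (Real.exp ε + δ) / (Real.exp ε + 1) * (Real.exp ε + 1) = Real.exp ε + δ := by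
      field_simp
    nlinarith [hq]
  · have hq : (Real.exp ε + δ) / (Real.exp ε + 1) * (Real.exp ε + 1) = Real.exp ε + δ := by
      field_simp
    nlinarith [hq]
  · intro x hx0 hx1 h1 h2
    rw [le_div_iff₀ hpos]; nlinarith
end

section
/- Let ε ≥ 0 and 0 ≤ δ ≤ 1, and set x = (e^ε + 2δ − 1)/(e^ε + 1) and y = 0. Then 0 ≤ x ≤ 1, the differential privacy constraints (1 + x − y)/2 ≤ e^ε·(1 + y − x)/2 + δ and (1 + y − x)/2 ≤ e^ε·(1 + x − y)/2 + δ hold, the utility equals (1 + x − y)/2 = (e^ε + δ)/(e^ε + 1), and the influence equals x + y = (e^ε + 2δ − 1)/(e^ε + 1). Hence a joint (non-independent) balanced binary mechanism achieves the same optimal utility (e^ε + δ)/(e^ε + 1) as the best independent one, with influence (e^ε + 2δ − 1)/(e^ε + 1). -/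
open Real

/-! With `y = 0`, `x` is the unique value making the first privacy constraint an equality,
`x (e^ε + 1) = e^ε + 2δ − 1`, and the utility `(1 + x)/2` is then `(e^ε + δ)/(e^ε + 1)`.
The second constraint is slack: since `x ≥ 0` and `e^ε ≥ 1`,
`(1 − x)/2 ≤ (1 + x)/2 ≤ e^ε (1 + x)/2 + δ`. -/

section BalancedBinary

variable {E δ x : ℝ}

theorem half_one_add_eq_mul_half_one_sub_add (hx : x * (E + 1) = E + 2 * δ - 1) :
    (1 + x) / 2 = E * ((1 - x) / 2) + δ := by
  linear_combination hx / 2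

theorem half_one_add_eq_div (hE : E + 1 ≠ 0) (hx : x * (E + 1) = E + 2 * δ - 1) :
    (1 + x) / 2 = (E + δ) / (E + 1) := by
  rw [eq_div_iff hE]
  linear_combination hx / 2

end BalancedBinary

/-- The joint balanced binary mechanism with x = (e^ε + 2δ − 1)/(e^ε + 1) and y = 0 is
feasible, achieves the optimal utility (e^ε + δ)/(e^ε + 1), and has influence
x + y = (e^ε + 2δ − 1)/(e^ε + 1). -/
theorem joint_balanced_binary_mechanism
    (ε δ : ℝ) (hε : 0 ≤ ε) (hδ₀ : 0 ≤ δ) (hδ₁ : δ ≤ 1)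
    (x y : ℝ) (hx : x = (Real.exp ε + 2 * δ - 1) / (Real.exp ε + 1)) (hy : y = 0) :
    (0 ≤ x ∧ x ≤ 1) ∧
    ((1 + x - y) / 2 ≤ Real.exp ε * ((1 + y - x) / 2) + δ) ∧
    ((1 + y - x) / 2 ≤ Real.exp ε * ((1 + x - y) / 2) + δ) ∧
    ((1 + x - y) / 2 = (Real.exp ε + δ) / (Real.exp ε + 1)) ∧
    (x + y = (Real.exp ε + 2 * δ - 1) / (Real.exp ε + 1)) := by
  subst hy
  simp only [add_zero, sub_zero]
  have hE : 1 ≤ exp ε := one_le_exp hε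
  have hE₁ : 0 < exp ε + 1 := by positivity
  have hx₀ : 0 ≤ x := hx ▸ div_nonneg (by linarith) hE₁.le
  have hx₁ : x ≤ 1 := hx ▸ (div_le_one hE₁).2 (by linarith)
  have hxE : x * (exp ε + 1) = exp ε + 2 * δ - 1 := by rw [hx, div_mul_cancel₀ _ hE₁.ne']
  refine ⟨⟨hx₀, hx₁⟩, (half_one_add_eq_mul_half_one_sub_add hxE).le, ?_,
    half_one_add_eq_div hE₁.ne' hxE, hx⟩
  calc (1 - x) / 2 ≤ (1 + x) / 2 := by linarith
    _ ≤ exp ε * ((1 + x) / 2) + δ :=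
      le_add_of_le_of_nonneg (le_mul_of_one_le_left (by linarith) hE) hδ₀
end

section
/- For all real numbers ε ≥ 0 and 0 ≤ δ ≤ 1, (e^ε + 2δ − 1)/(e^ε + 1) ≤ 1 − 2(1 − δ)(e^ε + δ)/(e^ε + 1)². That is, the influence of the optimal joint balanced binary (ε,δ)-differentially private mechanism is at most the influence of the optimal independent one. -/
open Real

theorem independent_sub_joint_influence_eq {a : ℝ} (δ : ℝ) (ha : a + 1 ≠ 0) :
    1 - 2 * (1 - δ) * (a + δ) / (a + 1) ^ 2 - (a + 2 * δ - 1) / (a + 1)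
      = 2 * (1 - δ) ^ 2 / (a + 1) ^ 2 := by
  field_simp
  ring

theorem joint_influence_le_independent_influence_general
    (ε δ : ℝ) :
    (Real.exp ε + 2 * δ - 1) / (Real.exp ε + 1)
      ≤ 1 - 2 * (1 - δ) * (Real.exp ε + δ) / (Real.exp ε + 1) ^ 2 := by
  have hpos : 0 < Real.exp ε + 1 := by positivity
  rw [← sub_nonneg, independent_sub_joint_influence_eq δ hpos.ne']
  positivity

/-- The influence of the optimal joint balanced binary (ε,δ)-DP mechanism is at most
the influence of the optimal independent one. -/
theorem joint_influence_le_independent_influence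
    (ε δ : ℝ) (hε : 0 ≤ ε) (hδ₀ : 0 ≤ δ) (hδ₁ : δ ≤ 1) :
    (Real.exp ε + 2 * δ - 1) / (Real.exp ε + 1)
      ≤ 1 - 2 * (1 - δ) * (Real.exp ε + δ) / (Real.exp ε + 1) ^ 2 :=
  joint_influence_le_independent_influence_general ε δ
end
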